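/- Let (X, d₁), (Y, d₂) be disjoint compact quasihypermetric spaces with M(X), M(Y) < ∞, and let Z = X ∪ Y with the metric d agreeing with d₁ on X, d₂ on Y, and d(x, y) = c for x ∈ X, y ∈ Y, where 2c ≥ max(D(X), D(Y)). Then (Z, d) is quasihypermetric if and only if 2c ≥ M(X) + M(Y). -/

import Mathlib

open MeasureTheory

/-- Integral of a function against a finite signed Borel measure, via Jordan decomposition. -/
noncomputable def sInt {X : Type*} [MeasurableSpace X] (μ : SignedMeasure X) (f : X → ℝ) : ℝ :=
  (∫ x, f x ∂μ.toJordanDecomposition.posPart) - ∫ x, f x ∂μ.toJordanDecomposition.negPart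

/-- Energy `I(μ, ν) = ∫∫ d(x,y) dμ(x) dν(y)` with respect to a kernel `d`. -/
noncomputable def en {X : Type*} [MeasurableSpace X] (d : X → X → ℝ)
    (μ ν : SignedMeasure X) : ℝ :=
  sInt μ (fun x => sInt ν (fun y => d x y))

/-- The potential `d_μ(x) = ∫ d(x,y) dμ(y)`. -/
noncomputable def dPot {X : Type*} [MeasurableSpace X] (d : X → X → ℝ)
    (μ : SignedMeasure X) (x : X) : ℝ :=
  sInt μ (fun y => d x y)

/-- The set of energies `I(μ)` of signed Borel measures of total mass one. -/
noncomputable def MSet (X : Type*) [MetricSpace X] [MeasurableSpace X] : Set ℝ :=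
  {r | ∃ μ : SignedMeasure X, μ Set.univ = (1 : ℝ) ∧ en (fun x y => dist x y) μ μ = r}

/-- The combined distance function on the disjoint union `X ⊕ Y`: it agrees with `d₁`
on `X`, with `d₂` on `Y`, and equals the constant `c` between `X` and `Y`. -/
def dJoin {X Y : Type*} (d₁ : X → X → ℝ) (d₂ : Y → Y → ℝ) (c : ℝ) :
    X ⊕ Y → X ⊕ Y → ℝ
  | .inl x, .inl x' => d₁ x x'
  | .inr y, .inr y' => d₂ y y'
  | _, _ => c

/-!
Write `μ_X`, `μ_Y` for the restrictions of a signed measure `μ` on `X ⊕ Y` to the two pieces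
and `a`, `b` for their masses. Since the kernel is constant equal to `c` across the pieces,
`I(μ) = I(μ_X) + I(μ_Y) + 2cab`. By quasihypermetricity and homogeneity, `I(ν) ≤ ν(X)² M(X)`
for every signed measure `ν` on `X`. Hence if `μ` has mass zero, so that `b = -a`,
`I(μ) ≤ a² (M(X) + M(Y) - 2c)`. Conversely, if `μ₁`, `μ₂` have mass one on `X` and `Y`, then
`μ₁ ⊕ (-μ₂)` has mass zero and energy `I(μ₁) + I(μ₂) - 2c`; taking suprema gives
`M(X) + M(Y) ≤ 2c`.
-/

open Set

theorem IsLUB.add_le_of_forall_add_le {α : Type*} [AddCommGroup α] [LinearOrder α]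
    [IsOrderedAddMonoid α] {s t : Set α} {a b c : α} (ha : IsLUB s a) (hb : IsLUB t b)
    (h : ∀ x ∈ s, ∀ y ∈ t, x + y ≤ c) : a + b ≤ c := by
  have : a ≤ c - b := ha.2 fun x hx =>
    le_sub_comm.1 (hb.2 fun y hy => le_sub_iff_add_le'.2 (h x hx y hy))
  exact le_sub_iff_add_le.1 this

theorem MeasurableEmbedding.inl {α β : Type*} [MeasurableSpace α] [MeasurableSpace β] :
    MeasurableEmbedding (@Sum.inl α β) :=
  ⟨Sum.inl_injective, measurable_inl, fun _ hs => measurableSet_inl_image.2 hs⟩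

theorem MeasurableEmbedding.inr {α β : Type*} [MeasurableSpace α] [MeasurableSpace β] :
    MeasurableEmbedding (@Sum.inr α β) :=
  ⟨Sum.inr_injective, measurable_inr, fun _ hs => measurableSet_inr_image.2 hs⟩

namespace MeasureTheory.VectorMeasure

variable {α β M : Type*} [MeasurableSpace α] [MeasurableSpace β] [AddCommMonoid M]
  [TopologicalSpace M] {f : α → β}

def comap (v : VectorMeasure β M) (hf : MeasurableEmbedding f) : VectorMeasure α M where
  measureOf' s := v (f '' s)
  empty' := by simp
  not_measurable' _ hs := v.not_measurable (mt hf.measurableSet_image.1 hs)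
  m_iUnion' s hs hdisj := by
    rw [image_iUnion]
    exact v.m_iUnion (fun i => hf.measurableSet_image.2 (hs i))
      (hdisj.mono fun i j h => (disjoint_image_iff hf.injective).2 h)

theorem comap_apply (v : VectorMeasure β M) (hf : MeasurableEmbedding f) (s : Set α) :
    v.comap hf s = v (f '' s) := rfl

theorem comap_sub {M : Type*} [AddCommGroup M] [TopologicalSpace M] [IsTopologicalAddGroup M]
    (v w : VectorMeasure β M) (hf : MeasurableEmbedding f) :
    (v - w).comap hf = v.comap hf - w.comap hf :=
  rfl

theorem comap_map (v : VectorMeasure α M) (hf : MeasurableEmbedding f) :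
    (v.map f).comap hf = v := by
  ext s hs
  rw [comap_apply, map_apply _ hf.measurable (hf.measurableSet_image.2 hs),
    hf.injective.preimage_image]

theorem comap_map_of_disjoint_range {γ : Type*} [MeasurableSpace γ] {g : γ → β}
    (v : VectorMeasure γ M) (hf : MeasurableEmbedding f) (hg : Measurable g)
    (hfg : Disjoint (range f) (range g)) : (v.map g).comap hf = 0 := by
  ext s hs
  rw [comap_apply, map_apply _ hg (hf.measurableSet_image.2 hs), zero_apply,
    preimage_eq_empty (hfg.mono_left (image_subset_range f s)), v.empty]

theorem comap_inl_apply_univ_add_comap_inr_apply_univ [T2Space M]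
    (v : VectorMeasure (α ⊕ β) M) :
    v.comap .inl univ + v.comap .inr univ = v univ := by
  rw [comap_apply, comap_apply, image_univ, image_univ,
    ← of_union isCompl_range_inl_range_inr.disjoint measurableSet_range_inl
      measurableSet_range_inr, range_inl_union_range_inr]

theorem _root_.MeasureTheory.Measure.toSignedMeasure_comap (P : Measure β) [IsFiniteMeasure P]
    (hf : MeasurableEmbedding f) : P.toSignedMeasure.comap hf = (P.comap f).toSignedMeasure := by
  ext s hs
  rw [comap_apply, Measure.toSignedMeasure_apply_measurable (hf.measurableSet_image.2 hs),
    Measure.toSignedMeasure_apply_measurable hs, measureReal_def, measureReal_def,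
    hf.comap_apply]

end MeasureTheory.VectorMeasure

section SignedIntegral

variable {α : Type*} [MeasurableSpace α]

theorem MeasureTheory.SignedMeasure.eq_posPart_sub_negPart (μ : SignedMeasure α) :
    μ = μ.toJordanDecomposition.posPart.toSignedMeasure
      - μ.toJordanDecomposition.negPart.toSignedMeasure :=
  μ.toSignedMeasure_toJordanDecomposition.symm

theorem sInt_sub_toSignedMeasure {P N : Measure α} [IsFiniteMeasure P] [IsFiniteMeasure N]
    {f : α → ℝ} (hf : Measurable f) {C : ℝ} (hC : ∀ x, ‖f x‖ ≤ C) :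
    sInt (P.toSignedMeasure - N.toSignedMeasure) f = (∫ x, f x ∂P) - ∫ x, f x ∂N := by
  set μ := P.toSignedMeasure - N.toSignedMeasure
  set P' := μ.toJordanDecomposition.posPart
  set N' := μ.toJordanDecomposition.negPart
  have hint : ∀ (Q : Measure α) [IsFiniteMeasure Q], Integrable f Q := fun Q _ =>
    .of_bound hf.aestronglyMeasurable C (ae_of_all _ hC)
  have hsum : P' + N = N' + P := by
    rw [← Measure.toSignedMeasure_eq_toSignedMeasure_iff, Measure.toSignedMeasure_add,
      Measure.toSignedMeasure_add, add_comm N'.toSignedMeasure,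
      ← sub_eq_sub_iff_add_eq_add, ← SignedMeasure.eq_posPart_sub_negPart μ]
  have h := congrArg (fun Q => ∫ x, f x ∂Q) hsum
  simp only [integral_add_measure (hint _) (hint _)] at h
  rw [sInt]
  linarith

theorem sInt_const (μ : SignedMeasure α) (r : ℝ) : sInt μ (fun _ => r) = μ univ * r := by
  conv_rhs => rw [SignedMeasure.eq_posPart_sub_negPart μ,
    Measure.toSignedMeasure_sub_apply MeasurableSet.univ]
  rw [sInt, integral_const, integral_const, smul_eq_mul, smul_eq_mul, sub_mul]

theorem sInt_const_mul (μ : SignedMeasure α) (f : α → ℝ) (r : ℝ) :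
    sInt μ (fun x => r * f x) = r * sInt μ f := by
  rw [sInt, sInt, integral_const_mul, integral_const_mul, mul_sub]

theorem sInt_add_const (μ : SignedMeasure α) {f : α → ℝ}
    (hf : Integrable f μ.totalVariation) (r : ℝ) :
    sInt μ (fun x => f x + r) = sInt μ f + μ univ * r := by
  rw [SignedMeasure.totalVariation, integrable_add_measure] at hf
  rw [← sInt_const, sInt, sInt, sInt, integral_add hf.1 (integrable_const r),
    integral_add hf.2 (integrable_const r)]
  ring

theorem norm_sInt_le (μ : SignedMeasure α) {f : α → ℝ} {C : ℝ} (hC : ∀ x, ‖f x‖ ≤ C) :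
    ‖sInt μ f‖ ≤ C * μ.totalVariation.real univ := by
  have hP := norm_integral_le_of_norm_le_const (μ := μ.toJordanDecomposition.posPart)
    (ae_of_all _ hC)
  have hN := norm_integral_le_of_norm_le_const (μ := μ.toJordanDecomposition.negPart)
    (ae_of_all _ hC)
  rw [SignedMeasure.totalVariation, measureReal_add_apply]
  exact (norm_sub_le _ _).trans (by linarith)

theorem sInt_smul (μ : SignedMeasure α) (f : α → ℝ) (r : ℝ) :
    sInt (r • μ) f = r * sInt μ f := by
  rcases le_or_gt 0 r with hr | hr
  · simp only [sInt, SignedMeasure.toJordanDecomposition_smul_real,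
      JordanDecomposition.real_smul_posPart_nonneg _ _ hr,
      JordanDecomposition.real_smul_negPart_nonneg _ _ hr, ENNReal.smul_def,
      integral_smul_measure, ENNReal.coe_toReal, Real.coe_toNNReal _ hr, smul_eq_mul]
    ring
  · simp only [sInt, SignedMeasure.toJordanDecomposition_smul_real,
      JordanDecomposition.real_smul_posPart_neg _ _ hr,
      JordanDecomposition.real_smul_negPart_neg _ _ hr, ENNReal.smul_def,
      integral_smul_measure, ENNReal.coe_toReal, Real.coe_toNNReal _ (neg_nonneg.2 hr.le),
      smul_eq_mul]
    ring

end SignedIntegral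

section Energy

variable {α : Type*} [MeasurableSpace α]

theorem en_eq_sInt_dPot (d : α → α → ℝ) (μ ν : SignedMeasure α) :
    en d μ ν = sInt μ (dPot d ν) :=
  rfl

theorem measurable_dPot {d : α → α → ℝ} (hd : Measurable (Function.uncurry d))
    (μ : SignedMeasure α) : Measurable (dPot d μ) :=
  (hd.stronglyMeasurable.integral_prod_right').measurable.sub
    (hd.stronglyMeasurable.integral_prod_right').measurable

theorem en_smul (d : α → α → ℝ) (μ : SignedMeasure α) (r : ℝ) :
    en d (r • μ) (r • μ) = r ^ 2 * en d μ μ := by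
  simp only [en, sInt_smul, sInt_const_mul]
  ring

theorem en_neg (d : α → α → ℝ) (μ : SignedMeasure α) : en d (-μ) (-μ) = en d μ μ := by
  rw [← neg_one_smul ℝ μ, en_smul]
  ring

end Energy

section DisjointUnion

variable {α β : Type*}

theorem norm_dJoin_le {d₁ : α → α → ℝ} {d₂ : β → β → ℝ} {C₁ C₂ : ℝ} (c : ℝ)
    (hC₁ : ∀ x x', ‖d₁ x x'‖ ≤ C₁) (hC₂ : ∀ y y', ‖d₂ y y'‖ ≤ C₂)
    (z w : α ⊕ β) : ‖dJoin d₁ d₂ c z w‖ ≤ max (max C₁ C₂) ‖c‖ := by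
  rcases z with x | y <;> rcases w with x' | y'
  · exact (hC₁ x x').trans ((le_max_left _ _).trans (le_max_left _ _))
  · exact le_max_right _ _
  · exact le_max_right _ _
  · exact (hC₂ y y').trans ((le_max_right _ _).trans (le_max_left _ _))

variable [MeasurableSpace α] [MeasurableSpace β]

theorem MeasureTheory.Measure.map_comap_inl_add_map_comap_inr (Q : Measure (α ⊕ β)) :
    (Q.comap Sum.inl).map Sum.inl + (Q.comap Sum.inr).map Sum.inr = Q := by
  ext s hs
  rw [Measure.add_apply, MeasurableEmbedding.inl.map_apply, MeasurableEmbedding.inr.map_apply,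
    MeasurableEmbedding.inl.comap_apply, MeasurableEmbedding.inr.comap_apply,
    image_preimage_eq_inter_range, image_preimage_eq_inter_range, ← compl_range_inl,
    ← sdiff_eq, measure_inter_add_sdiff _ measurableSet_range_inl]

theorem integral_sum_type (Q : Measure (α ⊕ β)) {g : α ⊕ β → ℝ} (hg : Integrable g Q) :
    ∫ z, g z ∂Q = (∫ x, g (.inl x) ∂Q.comap Sum.inl) + ∫ y, g (.inr y) ∂Q.comap Sum.inr := by
  rw [← Q.map_comap_inl_add_map_comap_inr] at hg
  conv_lhs => rw [← Q.map_comap_inl_add_map_comap_inr]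
  rw [integral_add_measure (integrable_add_measure.1 hg).1 (integrable_add_measure.1 hg).2,
    MeasurableEmbedding.inl.integral_map, MeasurableEmbedding.inr.integral_map]

theorem sInt_sum_type (μ : SignedMeasure (α ⊕ β)) {g : α ⊕ β → ℝ} (hg : Measurable g) {C : ℝ}
    (hC : ∀ z, ‖g z‖ ≤ C) :
    sInt μ g
      = sInt (μ.comap .inl) (fun x => g (.inl x)) + sInt (μ.comap .inr) (fun y => g (.inr y)) := by
  set P := μ.toJordanDecomposition.posPart
  set N := μ.toJordanDecomposition.negPart
  have hμ : μ = P.toSignedMeasure - N.toSignedMeasure := SignedMeasure.eq_posPart_sub_negPart μ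
  have hint : ∀ (Q : Measure (α ⊕ β)) [IsFiniteMeasure Q], Integrable g Q := fun Q _ =>
    .of_bound hg.aestronglyMeasurable C (ae_of_all _ hC)
  rw [hμ, VectorMeasure.comap_sub, VectorMeasure.comap_sub, Measure.toSignedMeasure_comap,
    Measure.toSignedMeasure_comap, Measure.toSignedMeasure_comap, Measure.toSignedMeasure_comap,
    sInt_sub_toSignedMeasure hg hC,
    sInt_sub_toSignedMeasure (f := fun x => g (.inl x)) (hg.comp measurable_inl) (fun _ => hC _),
    sInt_sub_toSignedMeasure (f := fun y => g (.inr y)) (hg.comp measurable_inr) (fun _ => hC _),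
    integral_sum_type P (hint P), integral_sum_type N (hint N)]
  ring

variable {d₁ : α → α → ℝ} {d₂ : β → β → ℝ} {C₁ C₂ : ℝ} (c : ℝ)

theorem dPot_dJoin_inl (hd₁ : Measurable (Function.uncurry d₁))
    (hC₁ : ∀ x x', ‖d₁ x x'‖ ≤ C₁) (μ : SignedMeasure (α ⊕ β)) (x : α) :
    dPot (dJoin d₁ d₂ c) μ (.inl x) = dPot d₁ (μ.comap .inl) x + μ.comap .inr univ * c := by
  have hmeas : Measurable (dJoin d₁ d₂ c (.inl x)) :=
    measurable_fun_sum (hd₁.comp measurable_prodMk_left) measurable_const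
  have hbdd : ∀ w, ‖dJoin d₁ d₂ c (.inl x) w‖ ≤ max C₁ ‖c‖ := by
    rintro (x' | y')
    exacts [(hC₁ x x').trans (le_max_left _ _), le_max_right _ _]
  rw [dPot, sInt_sum_type μ hmeas hbdd]
  exact congrArg₂ (· + ·) rfl (sInt_const _ c)

theorem dPot_dJoin_inr (hd₂ : Measurable (Function.uncurry d₂))
    (hC₂ : ∀ y y', ‖d₂ y y'‖ ≤ C₂) (μ : SignedMeasure (α ⊕ β)) (y : β) :
    dPot (dJoin d₁ d₂ c) μ (.inr y) = dPot d₂ (μ.comap .inr) y + μ.comap .inl univ * c := by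
  have hmeas : Measurable (dJoin d₁ d₂ c (.inr y)) :=
    measurable_fun_sum measurable_const (hd₂.comp measurable_prodMk_left)
  have hbdd : ∀ w, ‖dJoin d₁ d₂ c (.inr y) w‖ ≤ max C₂ ‖c‖ := by
    rintro (x' | y')
    exacts [le_max_right _ _, (hC₂ y y').trans (le_max_left _ _)]
  rw [dPot, sInt_sum_type μ hmeas hbdd, add_comm]
  exact congrArg₂ (· + ·) rfl (sInt_const _ c)

theorem en_dJoin (hd₁ : Measurable (Function.uncurry d₁))
    (hd₂ : Measurable (Function.uncurry d₂)) (hC₁ : ∀ x x', ‖d₁ x x'‖ ≤ C₁)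
    (hC₂ : ∀ y y', ‖d₂ y y'‖ ≤ C₂) (μ : SignedMeasure (α ⊕ β)) :
    en (dJoin d₁ d₂ c) μ μ = en d₁ (μ.comap .inl) (μ.comap .inl)
      + en d₂ (μ.comap .inr) (μ.comap .inr) + 2 * c * μ.comap .inl univ * μ.comap .inr univ := by
  set μX := μ.comap MeasurableEmbedding.inl
  set μY := μ.comap MeasurableEmbedding.inr
  have hpot : dPot (dJoin d₁ d₂ c) μ = Sum.elim (fun x => dPot d₁ μX x + μY univ * c)
      (fun y => dPot d₂ μY y + μX univ * c) :=
    funext (Sum.rec (dPot_dJoin_inl c hd₁ hC₁ μ) (dPot_dJoin_inr c hd₂ hC₂ μ))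
  have hmeas : Measurable (dPot (dJoin d₁ d₂ c) μ) := hpot ▸
    ((measurable_dPot hd₁ μX).add_const _).sumElim ((measurable_dPot hd₂ μY).add_const _)
  have hbdd (z : α ⊕ β) : ‖dPot (dJoin d₁ d₂ c) μ z‖ ≤ _ :=
    norm_sInt_le μ (norm_dJoin_le c hC₁ hC₂ z)
  have hintX : Integrable (dPot d₁ μX) (SignedMeasure.totalVariation μX) :=
    .of_bound (measurable_dPot hd₁ μX).aestronglyMeasurable _
      (ae_of_all _ fun x => norm_sInt_le μX (hC₁ x))
  have hintY : Integrable (dPot d₂ μY) (SignedMeasure.totalVariation μY) :=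
    .of_bound (measurable_dPot hd₂ μY).aestronglyMeasurable _
      (ae_of_all _ fun y => norm_sInt_le μY (hC₂ y))
  simp only [en_eq_sInt_dPot]
  rw [sInt_sum_type μ hmeas hbdd, hpot]
  simp only [Sum.elim_inl, Sum.elim_inr]
  rw [sInt_add_const μX hintX, sInt_add_const μY hintY]
  ring

end DisjointUnion

section Quasihypermetric

variable {X : Type*} [MetricSpace X]

theorem norm_dist_le_diam_univ [CompactSpace X] (x y : X) :
    ‖dist x y‖ ≤ Metric.diam (univ : Set X) :=
  (Real.norm_of_nonneg dist_nonneg).trans_le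
    (Metric.dist_le_diam_of_mem isCompact_univ.isBounded trivial trivial)

theorem en_le_sq_mul_of_mem_upperBounds [MeasurableSpace X]
    (hq : ∀ μ : SignedMeasure X, μ univ = (0 : ℝ) → en (fun x y => dist x y) μ μ ≤ 0)
    {m : ℝ} (hm : m ∈ upperBounds (MSet X)) (μ : SignedMeasure X) :
    en (fun x y => dist x y) μ μ ≤ μ univ ^ 2 * m := by
  rcases eq_or_ne (μ univ) 0 with h0 | h0
  · simpa [h0] using hq μ h0
  · have hnorm : en (fun x y => dist x y) ((μ univ)⁻¹ • μ) ((μ univ)⁻¹ • μ) ≤ m :=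
      hm ⟨_, by rw [smul_apply, smul_eq_mul, inv_mul_cancel₀ h0], rfl⟩
    rw [en_smul, inv_pow, inv_mul_le_iff₀ (by positivity)] at hnorm
    exact hnorm

end Quasihypermetric

theorem stmt6_general {X Y : Type*} [MetricSpace X] [CompactSpace X] [MeasurableSpace X] [BorelSpace X]
    [MetricSpace Y] [CompactSpace Y] [MeasurableSpace Y] [BorelSpace Y]
    (hqX : ∀ μ : SignedMeasure X, μ Set.univ = (0 : ℝ) → en (fun x y => dist x y) μ μ ≤ 0)
    (hqY : ∀ μ : SignedMeasure Y, μ Set.univ = (0 : ℝ) → en (fun x y => dist x y) μ μ ≤ 0)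
    (mX mY : ℝ) (hmX : IsLUB (MSet X) mX) (hmY : IsLUB (MSet Y) mY)
    (c : ℝ) :
    (∀ μ : SignedMeasure (X ⊕ Y), μ Set.univ = (0 : ℝ) →
        en (dJoin (fun x y => dist x y) (fun x y => dist x y) c) μ μ ≤ 0) ↔
      mX + mY ≤ 2 * c := by
  have hsplit := en_dJoin c measurable_dist measurable_dist norm_dist_le_diam_univ
    norm_dist_le_diam_univ (α := X) (β := Y)
  constructor
  · intro hZ
    refine hmX.add_le_of_forall_add_le hmY ?_
    rintro _ ⟨μ₁, hμ₁, rfl⟩ _ ⟨μ₂, hμ₂, rfl⟩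
    set ν := μ₁.map Sum.inl - μ₂.map Sum.inr
    have hνX : ν.comap .inl = μ₁ := by
      rw [VectorMeasure.comap_sub, VectorMeasure.comap_map,
        VectorMeasure.comap_map_of_disjoint_range _ _ measurable_inr
          isCompl_range_inl_range_inr.disjoint, sub_zero]
    have hνY : ν.comap .inr = -μ₂ := by
      rw [VectorMeasure.comap_sub, VectorMeasure.comap_map,
        VectorMeasure.comap_map_of_disjoint_range _ _ measurable_inl
          isCompl_range_inl_range_inr.symm.disjoint, zero_sub]
    have hν : ν univ = 0 := by
      rw [← VectorMeasure.comap_inl_apply_univ_add_comap_inr_apply_univ, hνX, hνY, neg_apply,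
        hμ₁, hμ₂, add_neg_cancel]
    have := hZ ν hν
    rw [hsplit, hνX, hνY, en_neg, neg_apply, hμ₁, hμ₂] at this
    linarith
  · intro hm μ hμ
    have hmass : μ.comap .inr univ = -μ.comap .inl univ := by
      rw [eq_neg_iff_add_eq_zero, add_comm,
        VectorMeasure.comap_inl_apply_univ_add_comap_inr_apply_univ, hμ]
    have hX := en_le_sq_mul_of_mem_upperBounds hqX hmX.1 (μ.comap .inl)
    have hY := en_le_sq_mul_of_mem_upperBounds hqY hmY.1 (μ.comap .inr)
    rw [hmass, neg_sq] at hY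
    rw [hsplit, hmass]
    nlinarith [mul_nonneg (sq_nonneg (μ.comap .inl univ)) (sub_nonneg.2 hm)]

/-- The join `Z = X ∪ Y` of two disjoint compact quasihypermetric spaces with finite
`M`-constants and cross-distance `c` (with `2c ≥ max(D(X), D(Y))`) is quasihypermetric
if and only if `2c ≥ M(X) + M(Y)`. -/
theorem stmt6 {X Y : Type*} [MetricSpace X] [CompactSpace X] [MeasurableSpace X] [BorelSpace X]
    [MetricSpace Y] [CompactSpace Y] [MeasurableSpace Y] [BorelSpace Y]
    (hqX : ∀ μ : SignedMeasure X, μ Set.univ = (0 : ℝ) → en (fun x y => dist x y) μ μ ≤ 0)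
    (hqY : ∀ μ : SignedMeasure Y, μ Set.univ = (0 : ℝ) → en (fun x y => dist x y) μ μ ≤ 0)
    (mX mY : ℝ) (hmX : IsLUB (MSet X) mX) (hmY : IsLUB (MSet Y) mY)
    (c : ℝ)
    (hc : max (Metric.diam (Set.univ : Set X)) (Metric.diam (Set.univ : Set Y)) ≤ 2 * c) :
    (∀ μ : SignedMeasure (X ⊕ Y), μ Set.univ = (0 : ℝ) →
        en (dJoin (fun x y => dist x y) (fun x y => dist x y) c) μ μ ≤ 0) ↔
      mX + mY ≤ 2 * c :=
  stmt6_general hqX hqY mX mY hmX hmY c
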